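/- Additivity of sandwiched Rényi relative entropy under tensor powers: for quantum states ρ, σ on a finite-dimensional Hilbert space with supp(ρ) ⊆ supp(σ), and for any α ∈ (0,1] and n ≥ 1, D_{1+α}(ρ^{⊗n} ‖ σ^{⊗n}) = n · D_{1+α}(ρ ‖ σ). -/

import Mathlib

/-!
Additivity of the sandwiched Rényi relative entropy under tensor powers:
for quantum states ρ, σ with supp(ρ) ⊆ supp(σ), α ∈ (0,1] and n ≥ 1,
  D_{1+α}(ρ^{⊗n} ‖ σ^{⊗n}) = n · D_{1+α}(ρ ‖ σ),
where D_{1+α}(ρ‖σ) = (1/α) log₂ Tr[(σ^{−α/(2(1+α))} ρ σ^{−α/(2(1+α))})^{1+α}] and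
tensor powers are Kronecker powers.
-/

open Matrix
open scoped ComplexOrder

set_option linter.unusedSectionVars false

variable {n : Type*} [Fintype n] [DecidableEq n]

lemma cfcHerm {A : Matrix n n ℂ} (hA : A.IsHermitian) (f : ℝ → ℝ) :
    (hA.cfc f).IsHermitian := by
  rw [← hA.cfc_eq f]
  exact cfc_predicate f A

/-- Pseudo-power `A^p` of a Hermitian matrix (on its support), via functional calculus. -/
noncomputable def mpow {A : Matrix n n ℂ} (hA : A.IsHermitian) (p : ℝ) : Matrix n n ℂ :=
  hA.cfc (fun t => if t = 0 then 0 else t ^ p)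

lemma sandwichHerm {ρ σ : Matrix n n ℂ} (hρ : ρ.IsHermitian) (hσ : σ.IsHermitian)
    (p : ℝ) : (mpow hσ p * ρ * mpow hσ p).IsHermitian := by
  have h := cfcHerm hσ (fun t => if t = 0 then 0 else t ^ p)
  unfold Matrix.IsHermitian mpow
  simp [conjTranspose_mul, Matrix.mul_assoc, h.eq, hρ.eq]

/-- The sandwiched Rényi relative entropy of order `1 + α` (base-2 logarithm). -/
noncomputable def sandRenyi (α : ℝ) (ρ σ : Matrix n n ℂ)
    (hρ : ρ.IsHermitian) (hσ : σ.IsHermitian) : ℝ :=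
  (1 / α) * Real.logb 2
    (((sandwichHerm hρ hσ (-(α / (2 * (1 + α))))).cfc
        (fun t => if t ≤ 0 then 0 else t ^ (1 + α))).trace.re)

/-- `N`-fold Kronecker (tensor) power of a matrix. -/
def kronPow {m : Type*} [Fintype m] (A : Matrix m m ℂ) (N : ℕ) :
    Matrix (Fin N → m) (Fin N → m) ℂ :=
  Matrix.of fun i j => ∏ k, A (i k) (j k)

lemma kronPowHerm {m : Type*} [Fintype m] {A : Matrix m m ℂ} (hA : A.IsHermitian)
    (N : ℕ) : (kronPow A N).IsHermitian := by
  unfold Matrix.IsHermitian kronPow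
  ext i j
  simp only [conjTranspose_apply, Matrix.of_apply, star_prod]
  exact Finset.prod_congr rfl fun k _ => by rw [← Matrix.conjTranspose_apply, hA.eq]

/-
The whole sandwiched expression for `ρ^{⊗N}, σ^{⊗N}` is the `N`-th Kronecker power of the
one for `ρ, σ`. Diagonalising `A = U diag(λ) U*`, the power `A^{⊗N}` is diagonalised by
`U^{⊗N}` with eigenvalues the products `∏ₖ λ_{iₖ}`; since both functions
`t ↦ t^p` (set to `0` at `0`) used in the definition are multiplicative on `[0, ∞)`, the
functional calculus commutes with Kronecker powers of positive semidefinite matrices. The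
trace of the Kronecker power is the `N`-th power of the trace, and the logarithm turns that
power into the factor `N`.
-/

lemma map_prod_of_nonneg {f : ℝ → ℝ} (hf1 : f 1 = 1)
    (hfmul : ∀ x y, 0 ≤ x → 0 ≤ y → f (x * y) = f x * f y) {ι : Type*} (s : Finset ι)
    {x : ι → ℝ} (hx : ∀ i, 0 ≤ x i) : f (∏ i ∈ s, x i) = ∏ i ∈ s, f (x i) := by
  induction s using Finset.cons_induction with
  | empty => simpa using hf1
  | cons i s _ ih =>
    rw [Finset.prod_cons, Finset.prod_cons, hfmul _ _ (hx i) (Finset.prod_nonneg fun j _ => hx j),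
      ih]

lemma ite_eq_zero_rpow_mul {p x y : ℝ} (hx : 0 ≤ x) (hy : 0 ≤ y) :
    (if x * y = 0 then 0 else (x * y) ^ p)
      = (if x = 0 then 0 else x ^ p) * (if y = 0 then 0 else y ^ p) := by
  by_cases hx0 : x = 0
  · simp [hx0]
  by_cases hy0 : y = 0
  · simp [hy0]
  simp [hx0, hy0, Real.mul_rpow hx hy]

lemma ite_nonpos_rpow_mul {p x y : ℝ} (hx : 0 ≤ x) (hy : 0 ≤ y) :
    (if x * y ≤ 0 then 0 else (x * y) ^ p)
      = (if x ≤ 0 then 0 else x ^ p) * (if y ≤ 0 then 0 else y ^ p) := by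
  simp only [hx.ge_iff_eq', hy.ge_iff_eq', (mul_nonneg hx hy).ge_iff_eq']
  exact ite_eq_zero_rpow_mul hx hy

lemma Set.Finite.exists_polynomial_eval_eqOn {s : Set ℝ} (hs : s.Finite) (f : ℝ → ℝ) :
    ∃ q : Polynomial ℝ, Set.EqOn (q.eval ·) f s := by
  classical
  refine ⟨Lagrange.interpolate hs.toFinset id f, fun x hx => ?_⟩
  exact Lagrange.eval_interpolate_at_node f (Set.injOn_id _) (hs.mem_toFinset.mpr hx)

section UnitaryDiagonalization

open Polynomial Unitary

lemma aeval_conjStarAlgAut_diagonal (U : unitaryGroup n ℂ) (d : n → ℝ) (q : ℝ[X]) :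
    aeval (conjStarAlgAut ℂ _ U (diagonal (RCLike.ofReal ∘ d))) q
      = conjStarAlgAut ℂ _ U (diagonal (RCLike.ofReal ∘ (q.eval ·) ∘ d)) := by
  change aeval (conjStarAlgAut ℝ _ U (diagonalAlgHom ℝ (RCLike.ofReal ∘ d))) q = _
  rw [aeval_algHom_apply, aeval_algHom_apply, aeval_pi_apply]
  change conjStarAlgAut ℂ _ U (diagonal _) = _
  congr 2
  funext i
  exact aeval_algebraMap_apply_eq_algebraMap_eval (d i) q

lemma cfc_conjStarAlgAut_diagonal (U : unitaryGroup n ℂ) (d : n → ℝ) (f : ℝ → ℝ) :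
    cfc f (conjStarAlgAut ℂ _ U (diagonal (RCLike.ofReal ∘ d)))
      = conjStarAlgAut ℂ _ U (diagonal (RCLike.ofReal ∘ f ∘ d)) := by
  set B := conjStarAlgAut ℂ _ U (diagonal (RCLike.ofReal ∘ d))
  have hB : B.IsHermitian :=
    isHermitian_mul_mul_conjTranspose _ (isHermitian_diagonal_of_self_adjoint _ (by
      ext i; simp))
  have hfin : (Set.range d ∪ spectrum ℝ B).Finite := by
    rw [hB.spectrum_real_eq_range_eigenvalues]
    exact (Set.finite_range _).union (Set.finite_range _)
  -- `cfc f B` only sees `f` on the spectrum, so it is the polynomial calculus of an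
  -- interpolant of `f`, which can be evaluated in any diagonalisation of `B`.
  obtain ⟨q, hq⟩ := hfin.exists_polynomial_eval_eqOn f
  calc cfc f B = cfc (q.eval ·) B := cfc_congr (hq.mono Set.subset_union_right).symm
    _ = aeval B q := cfc_polynomial q B hB.isSelfAdjoint
    _ = conjStarAlgAut ℂ _ U (diagonal (RCLike.ofReal ∘ f ∘ d)) := by
      rw [aeval_conjStarAlgAut_diagonal]
      congr 3
      funext i
      exact hq (Or.inl ⟨i, rfl⟩)

end UnitaryDiagonalization

section KronPow

variable {m : Type*} [Fintype m]

lemma kronPow_mul (A B : Matrix m m ℂ) (N : ℕ) :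
    kronPow (A * B) N = kronPow A N * kronPow B N := by
  ext i j
  simp only [kronPow, mul_apply, of_apply, Finset.prod_univ_sum, Fintype.piFinset_univ,
    Finset.prod_mul_distrib]

lemma kronPow_conjTranspose (A : Matrix m m ℂ) (N : ℕ) :
    kronPow Aᴴ N = (kronPow A N)ᴴ := by
  ext i j
  simp [kronPow, conjTranspose_apply, star_prod]

lemma trace_kronPow (A : Matrix m m ℂ) (N : ℕ) : (kronPow A N).trace = A.trace ^ N := by
  simp only [trace, diag, kronPow, of_apply]
  rw [← Fin.prod_const, Finset.prod_univ_sum, Fintype.piFinset_univ]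

variable [DecidableEq m]

lemma kronPow_diagonal (d : m → ℂ) (N : ℕ) :
    kronPow (diagonal d) N = diagonal fun i => ∏ k, d (i k) := by
  ext i j
  by_cases h : i = j
  · simp [kronPow, h]
  · obtain ⟨k, hk⟩ := Function.ne_iff.mp h
    simp only [kronPow, of_apply, diagonal_apply_ne _ h]
    exact Finset.prod_eq_zero (Finset.mem_univ k) (diagonal_apply_ne _ hk)

lemma kronPow_one (N : ℕ) : kronPow (1 : Matrix m m ℂ) N = 1 := by
  simp [← diagonal_one, kronPow_diagonal]

lemma kronPow_mem_unitaryGroup {U : Matrix m m ℂ} (hU : U ∈ unitaryGroup m ℂ) (N : ℕ) :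
    kronPow U N ∈ unitaryGroup (Fin N → m) ℂ := by
  rw [unitaryGroup, Unitary.mem_iff, star_eq_conjTranspose, ← kronPow_conjTranspose,
    ← kronPow_mul, ← kronPow_mul, ← star_eq_conjTranspose, Unitary.star_mul_self_of_mem hU,
    Unitary.mul_star_self_of_mem hU, kronPow_one]
  exact ⟨rfl, rfl⟩

def kronPowUnitary (U : unitaryGroup m ℂ) (N : ℕ) : unitaryGroup (Fin N → m) ℂ :=
  ⟨kronPow (U : Matrix m m ℂ) N, kronPow_mem_unitaryGroup U.2 N⟩

open Unitary

lemma kronPow_conjStarAlgAut_diagonal (U : unitaryGroup m ℂ) (d : m → ℝ) (N : ℕ) :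
    kronPow (conjStarAlgAut ℂ _ U (diagonal (RCLike.ofReal ∘ d))) N
      = conjStarAlgAut ℂ _ (kronPowUnitary U N)
          (diagonal (RCLike.ofReal ∘ fun i => ∏ k, d (i k))) := by
  simp [kronPowUnitary, kronPow_mul, star_eq_conjTranspose, kronPow_conjTranspose,
    kronPow_diagonal, Function.comp_def]

lemma cfc_kronPow {A : Matrix m m ℂ} (hA : A.PosSemidef) {f : ℝ → ℝ} (hf1 : f 1 = 1)
    (hfmul : ∀ x y, 0 ≤ x → 0 ≤ y → f (x * y) = f x * f y) (N : ℕ) :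
    cfc f (kronPow A N) = kronPow (cfc f A) N := by
  set U := hA.1.eigenvectorUnitary
  set e := hA.1.eigenvalues
  calc cfc f (kronPow A N)
      = cfc f (kronPow (conjStarAlgAut ℂ _ U (diagonal (RCLike.ofReal ∘ e))) N) := by
        rw [← hA.1.spectral_theorem]
    _ = conjStarAlgAut ℂ _ (kronPowUnitary U N)
          (diagonal (RCLike.ofReal ∘ f ∘ fun i => ∏ k, e (i k))) := by
        rw [kronPow_conjStarAlgAut_diagonal, cfc_conjStarAlgAut_diagonal]
    _ = kronPow (conjStarAlgAut ℂ _ U (diagonal (RCLike.ofReal ∘ f ∘ e))) N := by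
        rw [kronPow_conjStarAlgAut_diagonal]
        congr 2
        funext i
        simp only [Function.comp_apply]
        rw [map_prod_of_nonneg hf1 hfmul _ fun k => hA.eigenvalues_nonneg (i k),
          RCLike.ofReal_prod]
    _ = kronPow (cfc f A) N := by rw [hA.1.cfc_eq]; rfl

end KronPow

lemma Matrix.IsHermitian.re_trace_pow {A : Matrix n n ℂ} (hA : A.IsHermitian) (N : ℕ) :
    (A.trace ^ N).re = A.trace.re ^ N := by
  have hreal : (A.trace.re : ℂ) = A.trace :=
    Complex.conj_eq_iff_re.mp (by rw [starRingEnd_apply, ← trace_conjTranspose, hA.eq])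
  rw [← hreal, ← Complex.ofReal_pow, Complex.ofReal_re, Complex.ofReal_re]

theorem sandwiched_renyi_tensor_power_additive_general
    (ρ σ : Matrix n n ℂ) (hρ : ρ.PosSemidef)
    (hσ : σ.PosSemidef)
    (α : ℝ) (N : ℕ) :
    sandRenyi α (kronPow ρ N) (kronPow σ N) (kronPowHerm hρ.1 N) (kronPowHerm hσ.1 N)
      = N * sandRenyi α ρ σ hρ.1 hσ.1 := by
  set p := -(α / (2 * (1 + α)))
  have hpow : mpow (kronPowHerm hσ.1 N) p = kronPow (mpow hσ.1 p) N := by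
    unfold mpow
    rw [← IsHermitian.cfc_eq, ← IsHermitian.cfc_eq]
    exact cfc_kronPow (f := fun t => if t = 0 then 0 else t ^ p) hσ (by simp)
      (fun x y => ite_eq_zero_rpow_mul) N
  have hsandwich : (mpow hσ.1 p * ρ * mpow hσ.1 p).PosSemidef := by
    have hmpow : (mpow hσ.1 p)ᴴ = mpow hσ.1 p := cfcHerm hσ.1 _
    simpa only [hmpow] using hρ.mul_mul_conjTranspose_same (mpow hσ.1 p)
  have hcfc : (sandwichHerm (kronPowHerm hρ.1 N) (kronPowHerm hσ.1 N) p).cfc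
        (fun t => if t ≤ 0 then 0 else t ^ (1 + α))
      = kronPow ((sandwichHerm hρ.1 hσ.1 p).cfc
          fun t => if t ≤ 0 then 0 else t ^ (1 + α)) N := by
    rw [← IsHermitian.cfc_eq, ← IsHermitian.cfc_eq, hpow, ← kronPow_mul, ← kronPow_mul]
    exact cfc_kronPow (f := fun t => if t ≤ 0 then 0 else t ^ (1 + α)) hsandwich (by simp)
      (fun x y => ite_nonpos_rpow_mul) N
  rw [sandRenyi, sandRenyi, hcfc, trace_kronPow, IsHermitian.re_trace_pow (cfcHerm _ _),
    Real.logb_pow]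
  ring

theorem sandwiched_renyi_tensor_power_additive
    (ρ σ : Matrix n n ℂ) (hρ : ρ.PosSemidef) (hρtr : ρ.trace = 1)
    (hσ : σ.PosSemidef) (hσtr : σ.trace = 1)
    (hsupp : ∀ x : n → ℂ, σ *ᵥ x = 0 → ρ *ᵥ x = 0)
    (α : ℝ) (hα0 : 0 < α) (hα1 : α ≤ 1) (N : ℕ) (hN : 1 ≤ N) :
    sandRenyi α (kronPow ρ N) (kronPow σ N) (kronPowHerm hρ.1 N) (kronPowHerm hσ.1 N)
      = N * sandRenyi α ρ σ hρ.1 hσ.1 :=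
  sandwiched_renyi_tensor_power_additive_general ρ σ hρ hσ α N
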